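/- subStraTT is logically consistent: there is no term b and level k such that ∅ ⊢ b :^k ⊥ (no closed inhabitant of the empty type exists). -/

import Mathlib

/-! subStraTT without global definitions, in de Bruijn representation:
a single universe ⋆ with type-in-type, stratified dependent function types
`Πx:^j A. B`, abstractions, applications, the empty type and its eliminator.
Levels are natural numbers. -/

inductive Tm : Type
  | star
  | var (x : ℕ)
  | pi (j : ℕ) (A B : Tm)
  | lam (b : Tm)
  | app (b a : Tm)
  | bot
  | absurd (b : Tm)
  deriving DecidableEq

namespace Tm

/-- Shift free de Bruijn indices `≥ c` up by `d`. -/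
def shift (d c : ℕ) : Tm → Tm
  | star => star
  | var x => if x < c then var x else var (x + d)
  | pi j A B => pi j (shift d c A) (shift d (c + 1) B)
  | lam b => lam (shift d (c + 1) b)
  | app b a => app (shift d c b) (shift d c a)
  | bot => bot
  | absurd b => absurd (shift d c b)

/-- Substitute `u` for de Bruijn index `k` (decrementing greater indices). -/
def subst (k : ℕ) (u : Tm) : Tm → Tm
  | star => star
  | var x => if x < k then var x else if x = k then shift k 0 u else var (x - 1)
  | pi j A B => pi j (subst k u A) (subst (k + 1) u B)
  | lam b => lam (subst (k + 1) u b)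
  | app b a => app (subst k u b) (subst k u a)
  | bot => bot
  | absurd b => absurd (subst k u b)

end Tm

/-- Parallel reduction `a ⇒ b`: all visible β-redexes may be reduced
simultaneously in one step. -/
inductive Par : Tm → Tm → Prop
  | star : Par .star .star
  | var (x) : Par (.var x) (.var x)
  | bot : Par .bot .bot
  | pi {j A A' B B'} : Par A A' → Par B B' → Par (.pi j A B) (.pi j A' B')
  | lam {b b'} : Par b b' → Par (.lam b) (.lam b')
  | app {b b' a a'} : Par b b' → Par a a' → Par (.app b a) (.app b' a')
  | beta {b b' a a'} : Par b b' → Par a a' →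
      Par (.app (.lam b) a) (Tm.subst 0 a' b')
  | absurd {b b'} : Par b b' → Par (.absurd b) (.absurd b')

/-- `a ⇒* b`: reflexive–transitive closure of parallel reduction. -/
def Pars : Tm → Tm → Prop := Relation.ReflTransGen Par

/-- Joinability `a ⇔ b`: `a` and `b` parallel-reduce to a common term. -/
def Conv (a b : Tm) : Prop := ∃ c, Pars a c ∧ Pars b c

/-- Untyped definitional equality `a ≡ b`: the least reflexive, symmetric,
transitive congruence containing β-equivalence. -/
inductive DEq : Tm → Tm → Prop
  | refl (a) : DEq a a
  | sym : DEq a b → DEq b a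
  | trans : DEq a b → DEq b c → DEq a c
  | beta (b a) : DEq (.app (.lam b) a) (Tm.subst 0 a b)
  | pi {j A A' B B'} : DEq A A' → DEq B B' → DEq (.pi j A B) (.pi j A' B')
  | lam {b b'} : DEq b b' → DEq (.lam b) (.lam b')
  | app {b b' a a'} : DEq b b' → DEq a a' → DEq (.app b a) (.app b' a')
  | absurd {b b'} : DEq b b' → DEq (.absurd b) (.absurd b')

/-- A context entry `x :^k A` (level, type); index 0 is the most recent. -/
abbrev Ctx := List (ℕ × Tm)

mutual
  /-- Well-formed contexts. -/
  inductive CtxWf : Ctx → Prop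
    | nil : CtxWf []
    | cons {Γ k A} : CtxWf Γ → Typing Γ A k .star → CtxWf ((k, A) :: Γ)

  /-- Level-annotated typing `Γ ⊢ a :^k A` of subStraTT without global
  definitions: type-in-type, stratified dependent functions (domain at a
  strictly lower level, applications at the domain level), the empty type,
  variable subsumption, and conversion. -/
  inductive Typing : Ctx → Tm → ℕ → Tm → Prop
    | star {Γ k} : CtxWf Γ → Typing Γ .star k .star
    | var {Γ x j k A} : CtxWf Γ → Γ[x]? = some (j, A) → j ≤ k →
        Typing Γ (.var x) k (Tm.shift (x + 1) 0 A)
    | pi {Γ j k A B} : j < k → Typing Γ A j .star →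
        Typing ((j, A) :: Γ) B k .star → Typing Γ (.pi j A B) k .star
    | lam {Γ j k A B b} : j < k → Typing Γ A j .star →
        Typing ((j, A) :: Γ) b k B → Typing Γ (.lam b) k (.pi j A B)
    | app {Γ j k A B b a} : Typing Γ b k (.pi j A B) → Typing Γ a j A →
        Typing Γ (.app b a) k (Tm.subst 0 a B)
    | bot {Γ k} : CtxWf Γ → Typing Γ .bot k .star
    | absurd {Γ k b A} : Typing Γ b k .bot → Typing Γ A k .star →
        Typing Γ (.absurd b) k A
    | conv {Γ k a A B} : Typing Γ a k A → DEq A B → Typing Γ B k .star →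
        Typing Γ a k B
end

/-!
Consistency is proved with a logical relation on closed terms. Parallel reduction is confluent
(every reduct of `a` reduces to Takahashi's complete development of `a`), so definitional
equality implies joinability, and joinability never identifies `⋆`, `⊥` and `Π`.

A semantic type at level `k` is a code: `⋆`, `⊥`, the parallel expansion of a code, or
`Πx:^j A. B` with `j < k` together with a code for `B[a/x]` for every closed member `a` of `A`
at level `j`. Membership is defined by recursion on codes; membership at the lower levels is
fixed beforehand by well-founded recursion on the level. This is what makes `⋆ :^k ⋆` harmless:
the members of `⋆` at level `k` are the codes of level `k`, and these mention membership only at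
strictly lower levels.

Every well-typed term, closed by a substitution of semantically typed closed terms, is a member
of its type. Since `⊥` has no members, it has no closed inhabitant.
-/

/-! ### Substitution algebra -/

namespace Tm

def WellScoped : ℕ → Tm → Prop
  | _, star => True
  | c, var x => x < c
  | c, pi _ A B => WellScoped c A ∧ WellScoped (c + 1) B
  | c, lam b => WellScoped (c + 1) b
  | c, app b a => WellScoped c b ∧ WellScoped c a
  | _, bot => True
  | c, absurd b => WellScoped c b

def Closed (t : Tm) : Prop := WellScoped 0 t

theorem WellScoped.mono {c d : ℕ} {t : Tm} (ht : WellScoped c t) (hcd : c ≤ d) :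
    WellScoped d t := by
  induction t generalizing c d with
  | star | bot => trivial
  | var x => exact Nat.lt_of_lt_of_le ht hcd
  | pi _ _ _ ihA ihB => exact ⟨ihA ht.1 hcd, ihB ht.2 (by omega)⟩
  | lam _ ih => exact ih ht (by omega)
  | app _ _ ihb iha => exact ⟨ihb ht.1 hcd, iha ht.2 hcd⟩
  | absurd _ ih => exact ih ht hcd

theorem shift_of_wellScoped {c e : ℕ} {t : Tm} (d : ℕ) (ht : WellScoped c t) (hce : c ≤ e) :
    shift d e t = t := by
  induction t generalizing c e with
  | star | bot => rfl
  | var x => simp only [shift, WellScoped] at ht ⊢; split_ifs <;> first | rfl | omega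
  | pi _ _ _ ihA ihB => simp [shift, ihA ht.1 hce, ihB ht.2 (Nat.succ_le_succ hce)]
  | lam _ ih => simp [shift, ih ht (Nat.succ_le_succ hce)]
  | app _ _ ihb iha => simp [shift, ihb ht.1 hce, iha ht.2 hce]
  | absurd _ ih => simp [shift, ih ht hce]

theorem subst_of_wellScoped {c m : ℕ} {t : Tm} (u : Tm) (ht : WellScoped c t) (hcm : c ≤ m) :
    subst m u t = t := by
  induction t generalizing c m with
  | star | bot => rfl
  | var x => simp only [subst, WellScoped] at ht ⊢; split_ifs <;> first | rfl | omega
  | pi _ _ _ ihA ihB => simp [subst, ihA ht.1 hcm, ihB ht.2 (Nat.succ_le_succ hcm)]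
  | lam _ ih => simp [subst, ih ht (Nat.succ_le_succ hcm)]
  | app _ _ ihb iha => simp [subst, ihb ht.1 hcm, iha ht.2 hcm]
  | absurd _ ih => simp [subst, ih ht hcm]

theorem shift_shift_comm (t : Tm) {c' c : ℕ} (d d' : ℕ) (h : c' ≤ c) :
    shift d (c + d') (shift d' c' t) = shift d' c' (shift d c t) := by
  induction t generalizing c' c with
  | var x =>
    simp only [shift]
    split_ifs <;> simp only [shift] <;> split_ifs <;> first | rfl | omega | (congr 1; omega)
  | _ => simp_all [shift, Nat.add_right_comm c d' 1]

theorem shift_shift_add (t : Tm) {e k : ℕ} (d c : ℕ) (h : e ≤ k) :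
    shift d (e + c) (shift k c t) = shift (k + d) c t := by
  induction t generalizing c with
  | var x =>
    simp only [shift]
    split_ifs <;> simp only [shift] <;> split_ifs <;> first | rfl | omega | (congr 1; omega)
  | _ => simp_all [shift, Nat.add_assoc]

theorem subst_shift_comm (t : Tm) {e k : ℕ} (d : ℕ) (u : Tm) (h : e ≤ k) :
    subst (k + d) u (shift d e t) = shift d e (subst k u t) := by
  induction t generalizing e k with
  | var x =>
    simp only [shift, subst]
    split_ifs <;> simp only [shift, subst] <;> split_ifs <;>
      first | rfl | omega | (congr 1; omega) | simpa using (shift_shift_add u d 0 h).symm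
  | _ => simp_all [shift, subst, Nat.add_right_comm k d 1]

theorem subst_shift_succ (t : Tm) {e m c : ℕ} (u : Tm) (h₁ : e ≤ m) (h₂ : m ≤ c + e) :
    subst m u (shift (c + 1) e t) = shift c e t := by
  induction t generalizing e m with
  | var x =>
    simp only [shift]
    split_ifs <;> simp only [subst] <;> split_ifs <;> first | rfl | omega
  | pi _ _ _ ihA ihB =>
    simp [shift, subst, ihA h₁ h₂, ihB (e := e + 1) (m := m + 1) (by omega) (by omega)]
  | lam _ ih => simp [shift, subst, ih (e := e + 1) (m := m + 1) (by omega) (by omega)]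
  | _ => simp_all [shift, subst]

theorem shift_subst_comm (b : Tm) {k c : ℕ} (d : ℕ) (a : Tm) :
    shift d (c + k) (subst k a b) = subst k (shift d c a) (shift d (c + k + 1) b) := by
  induction b generalizing k with
  | var x =>
    simp only [subst, shift]
    split_ifs <;> simp only [shift, subst] <;> split_ifs <;>
      first | rfl | omega | (congr 1; omega) | exact shift_shift_comm a d k (Nat.zero_le c)
  | _ => simp_all [shift, subst, Nat.add_assoc]

theorem subst_subst_comm (b : Tm) {m k : ℕ} (u a : Tm) :
    subst (k + m) u (subst m a b) = subst m (subst k u a) (subst (k + m + 1) u b) := by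
  induction b generalizing m with
  | var x =>
    simp only [subst]
    split_ifs <;> (try simp only [subst]) <;> (try split_ifs) <;>
      first
        | rfl | omega
        | exact subst_shift_comm a m u (Nat.zero_le k)
        | exact (subst_shift_succ u (e := 0) (subst k u a) (Nat.zero_le m) (by omega)).symm
  | _ => simp_all [subst, Nat.add_assoc]

end Tm

/-! ### Confluence of parallel reduction -/

/-- Takahashi's complete development. -/
def Tm.dev : Tm → Tm
  | star => star
  | var x => var x
  | pi j A B => pi j (dev A) (dev B)
  | lam b => lam (dev b)
  | app (lam b) a => subst 0 (dev a) (dev b)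
  | app b a => app (dev b) (dev a)
  | bot => bot
  | absurd b => absurd (dev b)

namespace Par

protected theorem refl : ∀ t : Tm, Par t t
  | .star => .star
  | .var x => .var x
  | .pi _ A B => .pi (Par.refl A) (Par.refl B)
  | .lam b => .lam (Par.refl b)
  | .app b a => .app (Par.refl b) (Par.refl a)
  | .bot => .bot
  | .absurd b => .absurd (Par.refl b)

theorem shift {a b : Tm} (h : Par a b) (d c : ℕ) : Par (a.shift d c) (b.shift d c) := by
  induction h generalizing c with
  | star | var | bot => exact Par.refl _
  | pi _ _ ihA ihB => exact .pi (ihA c) (ihB (c + 1))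
  | lam _ ih => exact .lam (ih (c + 1))
  | app _ _ ihb iha => exact .app (ihb c) (iha c)
  | @beta _ p' _ q' _ _ ihp ihq =>
    rw [show (Tm.subst 0 q' p').shift d c = _ from Tm.shift_subst_comm p' (k := 0) d q']
    exact .beta (ihp (c + 1)) (ihq c)
  | absurd _ ih => exact .absurd (ih c)

theorem subst {b b' a a' : Tm} (hb : Par b b') (ha : Par a a') (k : ℕ) :
    Par (Tm.subst k a b) (Tm.subst k a' b') := by
  induction hb generalizing k with
  | star | bot => exact Par.refl _
  | var x =>
    simp only [Tm.subst]
    split_ifs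
    exacts [Par.refl _, ha.shift k 0, Par.refl _]
  | pi _ _ ihA ihB => exact .pi (ihA k) (ihB (k + 1))
  | lam _ ih => exact .lam (ih (k + 1))
  | app _ _ ihb iha => exact .app (ihb k) (iha k)
  | @beta _ p' _ q' _ _ ihp ihq =>
    rw [show Tm.subst k a' (Tm.subst 0 q' p') = _ from Tm.subst_subst_comm p' (m := 0) a' q']
    exact .beta (ihp (k + 1)) (ihq k)
  | absurd _ ih => exact .absurd (ih k)

theorem lam_inv {b t : Tm} (h : Par (.lam b) t) : ∃ b', t = .lam b' ∧ Par b b' := by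
  cases h with
  | lam hb => exact ⟨_, rfl, hb⟩

theorem to_dev {a b : Tm} (h : Par a b) : Par b a.dev := by
  induction h with
  | star => exact .star
  | var x => exact .var x
  | bot => exact .bot
  | pi _ _ ihA ihB => exact .pi ihA ihB
  | lam _ ih => exact .lam ih
  | @app b _ _ _ hb _ ihb iha =>
    cases b with
    | lam p =>
      obtain ⟨_, rfl, -⟩ := lam_inv hb
      obtain ⟨_, h, hp⟩ := lam_inv ihb
      cases h
      exact .beta hp iha
    | _ => exact .app ihb iha
  | beta _ _ ihp iha => exact ihp.subst iha 0
  | absurd _ ih => exact .absurd ih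

theorem diamond {a b c : Tm} (hb : Par a b) (hc : Par a c) : ∃ d, Par b d ∧ Par c d :=
  ⟨a.dev, hb.to_dev, hc.to_dev⟩

end Par

theorem conv_equivalence : Equivalence Conv :=
  Relation.equivalence_join_reflTransGen fun _ _ _ hb hc =>
    let ⟨d, hbd, hcd⟩ := Par.diamond hb hc
    ⟨d, .single hbd, .single hcd⟩

theorem Conv.refl (a : Tm) : Conv a a := conv_equivalence.refl a

theorem Conv.symm {a b : Tm} (h : Conv a b) : Conv b a := conv_equivalence.symm h

theorem Conv.trans {a b c : Tm} (h₁ : Conv a b) (h₂ : Conv b c) : Conv a c :=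
  conv_equivalence.trans h₁ h₂

theorem Pars.conv {a b : Tm} (h : Pars a b) : Conv a b := ⟨b, h, .refl⟩

theorem Par.conv {a b : Tm} (h : Par a b) : Conv a b := Pars.conv (.single h)

theorem Conv.map (f : Tm → Tm) (hf : ∀ {a a'}, Par a a' → Par (f a) (f a')) {a a' : Tm}
    (h : Conv a a') : Conv (f a) (f a') :=
  let ⟨c, hac, ha'c⟩ := h
  ⟨f c, hac.lift f fun _ _ => hf, ha'c.lift f fun _ _ => hf⟩

theorem Conv.map₂ (f : Tm → Tm → Tm)
    (hf : ∀ {a a' b b'}, Par a a' → Par b b' → Par (f a b) (f a' b'))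
    {a a' b b' : Tm} (ha : Conv a a') (hb : Conv b b') : Conv (f a b) (f a' b') :=
  (ha.map (f · b) fun h => hf h (.refl b)).trans (hb.map (f a' ·) fun h => hf (.refl a') h)

theorem DEq.conv {a b : Tm} (h : DEq a b) : Conv a b := by
  induction h with
  | refl a => exact .refl a
  | sym _ ih => exact ih.symm
  | trans _ _ ih₁ ih₂ => exact ih₁.trans ih₂
  | beta b a => exact Par.conv (.beta (.refl b) (.refl a))
  | pi _ _ ihA ihB => exact ihA.map₂ _ Par.pi ihB
  | lam _ ih => exact ih.map _ Par.lam
  | app _ _ ihb iha => exact ihb.map₂ _ Par.app iha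
  | absurd _ ih => exact ih.map _ Par.absurd

theorem Conv.subst {b b' : Tm} (h : Conv b b') (a : Tm) :
    Conv (Tm.subst 0 a b) (Tm.subst 0 a b') :=
  h.map _ fun h' => h'.subst (.refl a) 0

theorem Pars.star_inv {t : Tm} (h : Pars .star t) : t = .star := by
  induction h with
  | refl => rfl
  | tail _ r ih => subst ih; cases r; rfl

theorem Pars.bot_inv {t : Tm} (h : Pars .bot t) : t = .bot := by
  induction h with
  | refl => rfl
  | tail _ r ih => subst ih; cases r; rfl

theorem Pars.pi_inv {j : ℕ} {A B t : Tm} (h : Pars (.pi j A B) t) :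
    ∃ A' B', t = .pi j A' B' ∧ Pars A A' ∧ Pars B B' := by
  induction h with
  | refl => exact ⟨A, B, rfl, .refl, .refl⟩
  | tail _ r ih =>
    obtain ⟨A', B', rfl, hA, hB⟩ := ih
    cases r with
    | pi rA rB => exact ⟨_, _, rfl, hA.tail rA, hB.tail rB⟩

theorem Conv.star_inv {t : Tm} (h : Conv .star t) : Pars t .star := by
  obtain ⟨c, hc, htc⟩ := h
  rwa [← hc.star_inv]

theorem Conv.bot_inv {t : Tm} (h : Conv .bot t) : Pars t .bot := by
  obtain ⟨c, hc, htc⟩ := h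
  rwa [← hc.bot_inv]

theorem Conv.pi_inv {j : ℕ} {A B t : Tm} (h : Conv (.pi j A B) t) :
    ∃ A' B', Pars t (.pi j A' B') ∧ Conv A A' ∧ Conv B B' := by
  obtain ⟨c, hc, htc⟩ := h
  obtain ⟨A', B', rfl, hA, hB⟩ := hc.pi_inv
  exact ⟨A', B', htc, hA.conv, hB.conv⟩

theorem Conv.pi_pi_inv {j j' : ℕ} {A B A' B' : Tm} (h : Conv (.pi j A B) (.pi j' A' B')) :
    j = j' ∧ Conv A A' ∧ Conv B B' := by
  obtain ⟨A'', B'', h', hA, hB⟩ := h.pi_inv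
  obtain ⟨_, _, heq, hA', hB'⟩ := h'.pi_inv
  cases heq
  exact ⟨rfl, hA.trans hA'.conv.symm, hB.trans hB'.conv.symm⟩

theorem Conv.not_star_bot : ¬ Conv .star .bot := fun h => by cases h.star_inv.bot_inv

theorem Conv.not_star_pi {j : ℕ} {A B : Tm} : ¬ Conv .star (.pi j A B) := fun h => by
  obtain ⟨_, _, h', -⟩ := h.star_inv.pi_inv
  cases h'

theorem Conv.not_bot_pi {j : ℕ} {A B : Tm} : ¬ Conv .bot (.pi j A B) := fun h => by
  obtain ⟨_, _, h', -⟩ := h.bot_inv.pi_inv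
  cases h'

/-! ### Closing substitutions -/

namespace Tm

def scons (a : Tm) (ρ : ℕ → Tm) : ℕ → Tm
  | 0 => a
  | x + 1 => ρ x

/-- Replace every free index `x ≥ n` by `ρ (x - n)`, without shifting: meant for closed `ρ`. -/
def inst (ρ : ℕ → Tm) : ℕ → Tm → Tm
  | _, star => star
  | n, var x => if x < n then var x else ρ (x - n)
  | n, pi j A B => pi j (inst ρ n A) (inst ρ (n + 1) B)
  | n, lam b => lam (inst ρ (n + 1) b)
  | n, app b a => app (inst ρ n b) (inst ρ n a)
  | _, bot => bot
  | n, absurd b => absurd (inst ρ n b)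

def ClosedEnv (ρ : ℕ → Tm) : Prop := ∀ x, (ρ x).Closed

variable {ρ : ℕ → Tm}

theorem ClosedEnv.scons (hρ : ClosedEnv ρ) {a : Tm} (ha : a.Closed) : ClosedEnv (scons a ρ)
  | 0 => ha
  | x + 1 => hρ x

theorem wellScoped_inst (hρ : ClosedEnv ρ) (t : Tm) (n : ℕ) : WellScoped n (inst ρ n t) := by
  induction t generalizing n with
  | var x =>
    simp only [inst]
    split_ifs with h
    exacts [h, (hρ (x - n)).mono (Nat.zero_le n)]
  | _ => simp_all [inst, WellScoped]

theorem subst_inst (hρ : ClosedEnv ρ) {a : Tm} (ha : a.Closed) (b : Tm) (n : ℕ) :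
    subst n a (inst ρ (n + 1) b) = inst (scons a ρ) n b := by
  induction b generalizing n with
  | var x =>
    rcases lt_trichotomy x n with h | rfl | h
    · simp [inst, subst, h, Nat.lt_succ_of_lt h]
    · simp [inst, subst, scons, shift_of_wellScoped x ha le_rfl]
    · obtain ⟨y, rfl⟩ := Nat.exists_eq_add_of_lt h
      simp [inst, subst_of_wellScoped a (hρ _) (Nat.zero_le n), scons,
        show n + y + 1 - n = y + 1 by omega, show ¬ n + y + 1 < n by omega]
  | _ => simp_all [inst, subst]

theorem inst_shift_comm (hρ : ClosedEnv ρ) (t : Tm) {e p : ℕ} (m : ℕ) (h : e ≤ p) :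
    inst ρ (p + m) (shift m e t) = shift m e (inst ρ p t) := by
  induction t generalizing e p with
  | var x =>
    simp only [shift, inst]
    split_ifs <;> simp only [shift, inst] <;> (try split_ifs) <;>
      first | rfl | omega | rw [shift_of_wellScoped m (hρ _) (Nat.zero_le e)]; congr 1; omega
  | _ => simp_all [inst, shift, Nat.add_right_comm p m 1]

theorem inst_subst_comm (hρ : ClosedEnv ρ) (b : Tm) (m p : ℕ) (a : Tm) :
    inst ρ (p + m) (subst m a b) = subst m (inst ρ p a) (inst ρ (p + m + 1) b) := by
  induction b generalizing m with
  | var x =>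
    simp only [subst, inst]
    split_ifs <;> (try simp only [subst, inst]) <;> (try split_ifs) <;>
      first
        | rfl | omega
        | exact inst_shift_comm hρ a m (Nat.zero_le p)
        | rw [subst_of_wellScoped _ (hρ _) (Nat.zero_le m)]; congr 1; omega
  | _ => simp_all [inst, subst, Nat.add_assoc]

theorem inst_scons_shift (a t : Tm) (n : ℕ) :
    inst (scons a ρ) n (shift 1 n t) = inst ρ n t := by
  induction t generalizing n with
  | var x =>
    by_cases h : x < n
    · simp [shift, inst, h]
    · simp [shift, inst, h, show ¬ x + 1 < n by omega, show x + 1 - n = x - n + 1 by omega, scons]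
  | _ => simp_all [inst, shift]

end Tm

theorem Par.inst {ρ : ℕ → Tm} (hρ : Tm.ClosedEnv ρ) {a b : Tm} (h : Par a b) (n : ℕ) :
    Par (Tm.inst ρ n a) (Tm.inst ρ n b) := by
  induction h generalizing n with
  | star | var | bot => exact Par.refl _
  | pi _ _ ihA ihB => exact .pi (ihA n) (ihB (n + 1))
  | lam _ ih => exact .lam (ih (n + 1))
  | app _ _ ihb iha => exact .app (ihb n) (iha n)
  | @beta _ p' _ q' _ _ ihp ihq =>
    rw [show Tm.inst ρ n (Tm.subst 0 q' p') = _ from Tm.inst_subst_comm hρ p' 0 n q']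
    exact .beta (ihp (n + 1)) (ihq n)
  | absurd _ ih => exact .absurd (ih n)

theorem Conv.inst {ρ : ℕ → Tm} (hρ : Tm.ClosedEnv ρ) {a b : Tm} (h : Conv a b) (n : ℕ) :
    Conv (Tm.inst ρ n a) (Tm.inst ρ n b) :=
  h.map _ fun h' => h'.inst hρ n

/-! ### The logical relation -/

/-- `M j A a` stands for "`a` is a member of `A` at level `j`", needed only for `j < k`. Taking
it as a parameter makes `Code` an ordinary inductive family and `Code.El` an ordinary recursive
function; the induction–recursion is closed up by `MemBelow` below. -/
inductive Code (k : ℕ) (M : ℕ → Tm → Tm → Prop) : Tm → Type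
  | star : Code k M .star
  | bot : Code k M .bot
  | pi {j : ℕ} {A B : Tm} (hj : j < k)
      (cod : ∀ a, a.Closed → M j A a → Code k M (Tm.subst 0 a B)) : Code k M (.pi j A B)
  | expand {A A' : Tm} (h : Par A A') (u : Code k M A') : Code k M A

namespace Code

variable {k : ℕ} {M : ℕ → Tm → Tm → Prop}

def El : {A : Tm} → Code k M A → Tm → Prop
  | _, star, t => Nonempty (Code k M t)
  | _, bot, _ => False
  | _, pi (j := j) (A := A) _ cod, f =>
      ∀ a (ha : a.Closed) (hM : M j A a), (cod a ha hM).El (.app f a)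
  | _, expand _ u, t => u.El t

theorem el_of_par {A : Tm} (u : Code k M A) {t t' : Tm} (h : Par t t') (ht : u.El t') : u.El t := by
  induction u generalizing t t' with
  | star => exact ht.map (.expand h)
  | bot => exact ht
  | pi _ _ ih => exact fun a ha hM => ih a ha hM (.app h (.refl a)) (ht a ha hM)
  | expand _ _ ih => exact ih h ht

theorem exists_el_eq_of_pars {A A' : Tm} (h : Pars A A') (u : Code k M A') :
    ∃ u' : Code k M A, u'.El = u.El := by
  induction h using Relation.ReflTransGen.head_induction_on with
  | refl => exact ⟨u, rfl⟩
  | head r _ ih =>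
    obtain ⟨u', hu'⟩ := ih
    exact ⟨.expand r u', hu'⟩

theorem exists_pi_el_eq {j : ℕ} {A₀ B₀ A B : Tm} (hM : ∀ a, M j A₀ a ↔ M j A a)
    (hj : j < k)
    (cod₀ : ∀ a, a.Closed → M j A₀ a → Code k M (Tm.subst 0 a B₀))
    (hcod : ∀ a ha hM₀, ∃ u : Code k M (Tm.subst 0 a B), u.El = (cod₀ a ha hM₀).El) :
    ∃ cod : ∀ a, a.Closed → M j A a → Code k M (Tm.subst 0 a B),
      (pi hj cod).El = (pi hj cod₀).El := by
  choose cod hcod using fun a ha hMa => hcod a ha ((hM a).mpr hMa)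
  refine ⟨cod, funext fun f => propext ⟨fun h a ha hM₀ => ?_, fun h a ha hMa => ?_⟩⟩
  · simpa [El, hcod] using h a ha ((hM a).mp hM₀)
  · simpa [El, hcod] using h a ha ((hM a).mpr hMa)

theorem el_iff_of_conv_star {T : Tm} (u : Code k M T) (h : Conv T .star) {t : Tm} :
    u.El t ↔ Nonempty (Code k M t) := by
  induction u with
  | star => exact Iff.rfl
  | bot => exact absurd h.symm Conv.not_star_bot
  | pi => exact absurd h.symm Conv.not_star_pi
  | expand r _ ih => exact ih (r.conv.symm.trans h)

theorem not_el_of_conv_bot {T : Tm} (u : Code k M T) (h : Conv T .bot) {t : Tm} : ¬ u.El t := by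
  induction u with
  | star => exact absurd h Conv.not_star_bot
  | bot => exact id
  | pi => exact absurd h.symm Conv.not_bot_pi
  | expand r _ ih => exact ih (r.conv.symm.trans h)

variable (hM : ∀ j a {A A'}, Conv A A' → (M j A a ↔ M j A' a))
include hM

theorem exists_el_eq_of_conv {A A' : Tm} (u : Code k M A) (h : Conv A A') :
    ∃ u' : Code k M A', u'.El = u.El := by
  induction u generalizing A' with
  | star => exact exists_el_eq_of_pars h.star_inv star
  | bot => exact exists_el_eq_of_pars h.bot_inv bot
  | @pi j A B hj cod ih =>
    obtain ⟨A₂, B₂, h₂, hA, hB⟩ := h.pi_inv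
    obtain ⟨cod₂, hcod₂⟩ := exists_pi_el_eq (fun a => hM j a hA) hj cod
      fun a ha hM₀ => ih a ha hM₀ (hB.subst a)
    obtain ⟨u', hu'⟩ := exists_el_eq_of_pars h₂ (pi hj cod₂)
    exact ⟨u', hu'.trans hcod₂⟩
  | expand r _ ih => exact ih (r.conv.symm.trans h)

theorem exists_pi_of_conv_pi {T A B : Tm} {j : ℕ} (u : Code k M T) (h : Conv T (.pi j A B)) :
    ∃ (hj : j < k) (cod : ∀ a, a.Closed → M j A a → Code k M (Tm.subst 0 a B)),
      u.El = (pi hj cod).El := by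
  induction u with
  | star => exact absurd h Conv.not_star_pi
  | bot => exact absurd h Conv.not_bot_pi
  | pi hj cod _ =>
    obtain ⟨rfl, hA, hB⟩ := h.pi_pi_inv
    obtain ⟨cod', hcod'⟩ := exists_pi_el_eq (fun a => hM _ a hA) hj cod
      fun a ha hM₀ => exists_el_eq_of_conv hM _ (hB.subst a)
    exact ⟨hj, cod', hcod'.symm⟩
  | expand r _ ih => exact ih (r.conv.symm.trans h)

end Code

def MemBelow (k j : ℕ) (A t : Tm) : Prop :=
  if _ : j < k then ∃ u : Code j (MemBelow j) A, u.El t else False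
termination_by k

abbrev SemType (k : ℕ) (A : Tm) : Type := Code k (MemBelow k) A

def Mem (k : ℕ) (A t : Tm) : Prop := ∃ u : SemType k A, u.El t

theorem memBelow_iff {k j : ℕ} {A t : Tm} : MemBelow k j A t ↔ j < k ∧ Mem j A t := by
  rw [MemBelow]
  split_ifs with h <;> simp [h, Mem]

theorem memBelow_congr (k j : ℕ) (a : Tm) {A A' : Tm} (h : Conv A A') :
    MemBelow k j A a ↔ MemBelow k j A' a := by
  induction k using Nat.strong_induction_on generalizing j a A A' with
  | _ k ih =>
    have mem_of_conv {B B' : Tm} (hB : Conv B B') (hj : j < k) : Mem j B a → Mem j B' a :=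
      fun ⟨u, hu⟩ =>
        let ⟨u', hu'⟩ := u.exists_el_eq_of_conv (ih j hj) hB
        ⟨u', hu' ▸ hu⟩
    simp only [memBelow_iff]
    exact and_congr_right fun hj => ⟨mem_of_conv h hj, mem_of_conv h.symm hj⟩

theorem memBelow_iff_of_lt {k j : ℕ} (h : j < k) {A t : Tm} : MemBelow k j A t ↔ Mem j A t := by
  simp [memBelow_iff, h]

theorem memBelow_of_lt {i j k : ℕ} (hi : i < j) {A t : Tm} (h : MemBelow k i A t) :
    MemBelow j i A t :=
  (memBelow_iff_of_lt hi).mpr (memBelow_iff.mp h).2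

namespace SemType

variable {j k : ℕ}

theorem exists_pi_of_conv_pi {T A B : Tm} {i : ℕ} (u : SemType k T) (h : Conv T (.pi i A B)) :
    ∃ (hi : i < k) (cod : ∀ a, a.Closed → MemBelow k i A a → SemType k (Tm.subst 0 a B)),
      u.El = (Code.pi hi cod).El :=
  Code.exists_pi_of_conv_pi (memBelow_congr k) u h

def lift (hjk : j ≤ k) : {A : Tm} → SemType j A → SemType k A
  | _, .star => .star
  | _, .bot => .bot
  | _, .pi hi cod => .pi (Nat.lt_of_lt_of_le hi hjk) fun a ha hM =>
      lift hjk (cod a ha (memBelow_of_lt hi hM))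
  | _, .expand r u => .expand r (lift hjk u)

theorem el_subset (hjk : j ≤ k) {A B : Tm} (h : Conv A B) (u : SemType j A) (v : SemType k B)
    {t : Tm} (ht : u.El t) : v.El t := by
  induction u generalizing B t with
  | star => exact (v.el_iff_of_conv_star h.symm).mpr (ht.map (lift hjk))
  | bot => exact ht.elim
  | pi hi cod ih =>
    obtain ⟨_, cod', hv⟩ := v.exists_pi_of_conv_pi h.symm
    rw [hv]
    intro a ha hM
    exact ih a ha _ (.refl _) (cod' a ha hM) (ht a ha (memBelow_of_lt hi hM))
  | expand r _ ih => exact ih (r.conv.symm.trans h) v ht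

end SemType

namespace Mem

variable {j k : ℕ}

theorem mono (hjk : j ≤ k) {A t : Tm} : Mem j A t → Mem k A t
  | ⟨u, hu⟩ => ⟨u.lift hjk, u.el_subset hjk (.refl A) _ hu⟩

theorem of_conv {A B t : Tm} (ht : Mem k A t) (h : Conv A B) (v : SemType k B) : Mem k B t :=
  let ⟨u, hu⟩ := ht
  ⟨v, u.el_subset le_rfl h v hu⟩

theorem of_par {A t t' : Tm} (h : Par t t') : Mem k A t' → Mem k A t
  | ⟨u, hu⟩ => ⟨u, u.el_of_par h hu⟩

theorem apply {A B f a : Tm} (hf : Mem k (.pi j A B) f) (ha : a.Closed) (hMa : Mem j A a) :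
    Mem k (Tm.subst 0 a B) (.app f a) := by
  obtain ⟨u, hu⟩ := hf
  obtain ⟨hj, cod, hcod⟩ := u.exists_pi_of_conv_pi (.refl _)
  rw [hcod] at hu
  exact ⟨_, hu a ha ((memBelow_iff_of_lt hj).mpr hMa)⟩

end Mem

theorem mem_star_iff {k : ℕ} {A : Tm} : Mem k .star A ↔ Nonempty (SemType k A) :=
  ⟨fun ⟨u, hu⟩ => (u.el_iff_of_conv_star (.refl _)).mp hu, fun h => ⟨.star, h⟩⟩

theorem not_mem_bot {k : ℕ} {t : Tm} : ¬ Mem k .bot t :=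
  fun ⟨u, hu⟩ => u.not_el_of_conv_bot (.refl _) hu

theorem mem_pi_of_forall {j k : ℕ} {A B f : Tm} (hj : j < k)
    (h : ∀ a, a.Closed → Mem j A a → Mem k (Tm.subst 0 a B) (.app f a)) :
    Mem k (.pi j A B) f := by
  choose cod hcod using fun a ha (hM : MemBelow k j A a) => h a ha ((memBelow_iff_of_lt hj).mp hM)
  exact ⟨.pi hj cod, hcod⟩

theorem nonempty_semType_pi {j k : ℕ} {A B : Tm} (hj : j < k)
    (h : ∀ a, a.Closed → Mem j A a → Nonempty (SemType k (Tm.subst 0 a B))) :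
    Nonempty (SemType k (.pi j A B)) :=
  ⟨.pi hj fun a ha hM => Classical.choice (h a ha ((memBelow_iff_of_lt hj).mp hM))⟩

/-! ### The fundamental theorem -/

def SemEnv (Γ : Ctx) (ρ : ℕ → Tm) : Prop :=
  Tm.ClosedEnv ρ ∧
    ∀ x j A, Γ[x]? = some (j, A) → Mem j (Tm.inst ρ 0 (Tm.shift (x + 1) 0 A)) (ρ x)

theorem SemEnv.scons {Γ : Ctx} {ρ : ℕ → Tm} (hρ : SemEnv Γ ρ) {j : ℕ} {A a : Tm}
    (ha : a.Closed) (hA : Mem j (Tm.inst ρ 0 A) a) : SemEnv ((j, A) :: Γ) (Tm.scons a ρ) := by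
  refine ⟨hρ.1.scons ha, fun x i B hx => ?_⟩
  cases x with
  | zero =>
    cases hx
    rwa [Tm.scons, Tm.inst_scons_shift]
  | succ x =>
    rw [← Tm.shift_shift_add B (e := 0) 1 0 (Nat.zero_le _), Nat.zero_add, Tm.inst_scons_shift]
    exact hρ.2 x i B hx

theorem semEnv_nil : SemEnv [] fun _ => .star :=
  ⟨fun _ => trivial, fun _ _ _ hx => nomatch hx⟩

def SemTyping (Γ : Ctx) (a : Tm) (k : ℕ) (A : Tm) : Prop :=
  ∀ ρ, SemEnv Γ ρ → Mem k (Tm.inst ρ 0 A) (Tm.inst ρ 0 a)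

namespace SemTyping

variable {Γ : Ctx} {j k : ℕ} {A B a b : Tm}

theorem star : SemTyping Γ .star k .star :=
  fun _ _ => mem_star_iff.mpr ⟨.star⟩

theorem var {x : ℕ} (hx : Γ[x]? = some (j, A)) (hjk : j ≤ k) :
    SemTyping Γ (.var x) k (Tm.shift (x + 1) 0 A) := fun ρ hρ => by
  simpa [Tm.inst] using (hρ.2 x j A hx).mono hjk

theorem pi (hjk : j < k) (hB : SemTyping ((j, A) :: Γ) B k .star) :
    SemTyping Γ (.pi j A B) k .star := fun ρ hρ => by
  refine mem_star_iff.mpr (nonempty_semType_pi hjk fun a ha hMa => ?_)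
  rw [Tm.subst_inst hρ.1 ha]
  exact mem_star_iff.mp (hB _ (hρ.scons ha hMa))

theorem lam (hjk : j < k) (hb : SemTyping ((j, A) :: Γ) b k B) :
    SemTyping Γ (.lam b) k (.pi j A B) := fun ρ hρ => by
  refine mem_pi_of_forall hjk fun a ha hMa => Mem.of_par (.beta (.refl _) (.refl _)) ?_
  rw [Tm.subst_inst hρ.1 ha, Tm.subst_inst hρ.1 ha]
  exact hb _ (hρ.scons ha hMa)

theorem app (hb : SemTyping Γ b k (.pi j A B)) (ha : SemTyping Γ a j A) :
    SemTyping Γ (.app b a) k (Tm.subst 0 a B) := fun ρ hρ => by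
  rw [show Tm.inst ρ 0 (Tm.subst 0 a B) = _ from Tm.inst_subst_comm hρ.1 B 0 0 a]
  exact (hb ρ hρ).apply (Tm.wellScoped_inst hρ.1 a 0) (ha ρ hρ)

theorem bot : SemTyping Γ .bot k .star :=
  fun _ _ => mem_star_iff.mpr ⟨.bot⟩

theorem absurd (hb : SemTyping Γ b k .bot) : SemTyping Γ (.absurd b) k A :=
  fun ρ hρ => (not_mem_bot (hb ρ hρ)).elim

theorem conv (ha : SemTyping Γ a k A) (hAB : DEq A B) (hB : SemTyping Γ B k .star) :
    SemTyping Γ a k B := fun ρ hρ =>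
  (ha ρ hρ).of_conv (hAB.conv.inst hρ.1 0) (Classical.choice (mem_star_iff.mp (hB ρ hρ)))

end SemTyping

theorem Typing.sound {Γ : Ctx} {a : Tm} {k : ℕ} {A : Tm} (h : Typing Γ a k A) :
    SemTyping Γ a k A :=
  Typing.rec (motive_1 := fun _ _ => True) (motive_2 := fun Γ a k A _ => SemTyping Γ a k A)
    trivial (fun _ _ _ _ => trivial)
    (fun _ _ => .star) (fun _ hx hjk _ => .var hx hjk) (fun hjk _ _ _ ihB => .pi hjk ihB)
    (fun hjk _ _ _ ihb => .lam hjk ihb) (fun _ _ ihb iha => .app ihb iha) (fun _ _ => .bot)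
    (fun _ _ ihb _ => .absurd ihb) (fun _ hAB _ iha ihB => .conv iha hAB ihB) h

/-- **Logical consistency of subStraTT**: there is no closed inhabitant of the
empty type at any level. -/
theorem substratt_consistency : ¬ ∃ (b : Tm) (k : ℕ), Typing [] b k Tm.bot := by
  rintro ⟨b, k, h⟩
  exact not_mem_bot (h.sound _ semEnv_nil)
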